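/- arXiv:2306.02746 — 6 statements merged into one kernel-verified Lean document; each statement's English description precedes it below -/
import Mathlib

section
/- Let T ≥ 2 be an integer, let γ ∈ C be an integer circulation, and let x ∈ ℝ^A with ℓ ≤ x ≤ u and γᵀx ≡ 0 (mod T). Then ⌈(γ₊ᵀℓ − γ₋ᵀu)/T⌉ ≤ γᵀx/T ≤ ⌊(γ₊ᵀu − γ₋ᵀℓ)/T⌋ (Odijk's cycle inequality). -/
open Finset

/-- Odijk's cycle inequality. -/
theorem split_stmt3 {V A : Type} [Fintype V] [Fintype A] [DecidableEq V]
    (src tgt : A → V) (T : ℤ) (hT : 2 ≤ T)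
    (ℓ u : A → ℤ) (hlu : ∀ a, ℓ a ≤ u a)
    (γ : A → ℤ)
    (hcirc : ∀ v : V, ∑ a ∈ Finset.univ.filter (fun a => tgt a = v), γ a
           = ∑ a ∈ Finset.univ.filter (fun a => src a = v), γ a)
    (x : A → ℝ) (hx : ∀ a, (ℓ a : ℝ) ≤ x a ∧ x a ≤ (u a : ℝ))
    (hdiv : ∃ k : ℤ, ∑ a, (γ a : ℝ) * x a = (T : ℝ) * (k : ℝ)) :
    ((⌈(((∑ a, max (γ a) 0 * ℓ a - ∑ a, max (-γ a) 0 * u a : ℤ) : ℚ) / (T : ℚ))⌉ : ℝ)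
        ≤ (∑ a, (γ a : ℝ) * x a) / (T : ℝ)) ∧
    ((∑ a, (γ a : ℝ) * x a) / (T : ℝ)
        ≤ ((⌊(((∑ a, max (γ a) 0 * u a - ∑ a, max (-γ a) 0 * ℓ a : ℤ) : ℚ) / (T : ℚ))⌋ : ℤ) : ℝ)) := by
  obtain ⟨k, hk⟩ := hdiv
  have hT0 : (0 : ℝ) < (T : ℝ) := by exact_mod_cast lt_of_lt_of_le (by norm_num) hT
  set L : ℤ := ∑ a, max (γ a) 0 * ℓ a - ∑ a, max (-γ a) 0 * u a with hL
  set U : ℤ := ∑ a, max (γ a) 0 * u a - ∑ a, max (-γ a) 0 * ℓ a with hU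
  have hlow : (L : ℝ) ≤ ∑ a, (γ a : ℝ) * x a := by
    have : (L : ℝ) = ∑ a, ((max (γ a) 0 : ℝ) * (ℓ a : ℝ) - (max (-γ a) 0 : ℝ) * (u a : ℝ)) := by
      rw [hL]; push_cast; rw [Finset.sum_sub_distrib]
    rw [this]
    apply Finset.sum_le_sum
    intro a _
    obtain ⟨h1, h2⟩ := hx a
    rcases le_or_gt 0 (γ a) with h | h
    · have h' : (0:ℝ) ≤ (γ a : ℝ) := by exact_mod_cast h
      have e1 : ((γ a : ℝ) ⊔ 0) = (γ a : ℝ) := max_eq_left h'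
      have e2 : ((-(γ a : ℝ)) ⊔ 0) = 0 := max_eq_right (by linarith)
      rw [e1, e2]; nlinarith
    · have h' : (γ a : ℝ) ≤ 0 := by exact_mod_cast h.le
      have e1 : ((γ a : ℝ) ⊔ 0) = 0 := max_eq_right h'
      have e2 : ((-(γ a : ℝ)) ⊔ 0) = -(γ a : ℝ) := max_eq_left (by linarith)
      rw [e1, e2]; nlinarith
  have hhigh : ∑ a, (γ a : ℝ) * x a ≤ (U : ℝ) := by
    have : (U : ℝ) = ∑ a, ((max (γ a) 0 : ℝ) * (u a : ℝ) - (max (-γ a) 0 : ℝ) * (ℓ a : ℝ)) := by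
      rw [hU]; push_cast; rw [Finset.sum_sub_distrib]
    rw [this]
    apply Finset.sum_le_sum
    intro a _
    obtain ⟨h1, h2⟩ := hx a
    rcases le_or_gt 0 (γ a) with h | h
    · have h' : (0:ℝ) ≤ (γ a : ℝ) := by exact_mod_cast h
      have e1 : ((γ a : ℝ) ⊔ 0) = (γ a : ℝ) := max_eq_left h'
      have e2 : ((-(γ a : ℝ)) ⊔ 0) = 0 := max_eq_right (by linarith)
      rw [e1, e2]; nlinarith
    · have h' : (γ a : ℝ) ≤ 0 := by exact_mod_cast h.le
      have e1 : ((γ a : ℝ) ⊔ 0) = 0 := max_eq_right h'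
      have e2 : ((-(γ a : ℝ)) ⊔ 0) = -(γ a : ℝ) := max_eq_left (by linarith)
      rw [e1, e2]; nlinarith
  -- L ≤ T*k ≤ U over ℤ
  have hLk : L ≤ T * k := by
    have : (L : ℝ) ≤ (T : ℝ) * (k : ℝ) := hk ▸ hlow
    exact_mod_cast this
  have hkU : T * k ≤ U := by
    have : (T : ℝ) * (k : ℝ) ≤ (U : ℝ) := hk ▸ hhigh
    exact_mod_cast this
  have hTQ : (0 : ℚ) < (T : ℚ) := by exact_mod_cast lt_of_lt_of_le (by norm_num) hT
  have hquot : (∑ a, (γ a : ℝ) * x a) / (T : ℝ) = (k : ℝ) := by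
    rw [hk]; field_simp
  rw [hquot]
  constructor
  · have : ⌈((L : ℚ)) / (T : ℚ)⌉ ≤ k := by
      rw [Int.ceil_le, div_le_iff₀ hTQ]
      have : (L:ℚ) ≤ (T:ℚ) * (k:ℚ) := by exact_mod_cast hLk
      linarith
    exact_mod_cast this
  · have : k ≤ ⌊((U : ℚ)) / (T : ℚ)⌋ := by
      rw [Int.le_floor, le_div_iff₀ hTQ]
      have : (T:ℚ) * (k:ℚ) ≤ (U:ℚ) := by exact_mod_cast hkU
      linarith
    exact_mod_cast this
end

section
/- Let T ≥ 2, γ ∈ ℤ^A a circulation, F ⊆ A, and α := [−Σ_{a∉F} γ_a ℓ_a − Σ_{a∈F} γ_a u_a]_T. If x ∈ ℝ^A satisfies ℓ ≤ x ≤ u and γᵀx ≡ 0 (mod T), then the flip inequality holds: (T−α)·Σ_{a∉F, γ_a>0} γ_a (x_a−ℓ_a) + α·Σ_{a∉F, γ_a<0} (−γ_a)(x_a−ℓ_a) + α·Σ_{a∈F, γ_a>0} γ_a (u_a−x_a) + (T−α)·Σ_{a∈F, γ_a<0} (−γ_a)(u_a−x_a) ≥ α(T−α). -/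
open Finset

lemma sum_split_aux {A : Type} [Fintype A] [DecidableEq A] (s : Finset A) (γ : A → ℤ)
    (f : A → ℝ) :
    ∑ a ∈ s.filter (fun a => 0 < γ a), (γ a : ℝ) * f a
      + ∑ a ∈ s.filter (fun a => γ a < 0), (γ a : ℝ) * f a
      = ∑ a ∈ s, (γ a : ℝ) * f a := by
  rw [← Finset.sum_filter_add_sum_filter_not s (fun a => 0 < γ a)]
  congr 1
  apply Finset.sum_subset
  · intro a ha
    simp only [Finset.mem_filter] at ha ⊢
    obtain ⟨h1, h2⟩ := ha
    exact ⟨h1, by omega⟩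
  · intro a ha hna
    simp only [Finset.mem_filter] at ha hna
    have h2 := ha.2
    have h3 : ¬ γ a < 0 := fun h => hna ⟨ha.1, h⟩
    have h0 : γ a = 0 := by omega
    simp [h0]

/-- The flip inequality for a circulation `γ` and an arc set `F`. -/
theorem split_stmt5 {V A : Type} [Fintype V] [Fintype A] [DecidableEq V] [DecidableEq A]
    (src tgt : A → V) (T : ℤ) (hT : 2 ≤ T)
    (ℓ u : A → ℤ) (hlu : ∀ a, ℓ a ≤ u a)
    (γ : A → ℤ)
    (hcirc : ∀ v : V, ∑ a ∈ Finset.univ.filter (fun a => tgt a = v), γ a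
           = ∑ a ∈ Finset.univ.filter (fun a => src a = v), γ a)
    (F : Finset A)
    (α : ℤ) (hα : α = (-(∑ a ∈ Fᶜ, γ a * ℓ a) - ∑ a ∈ F, γ a * u a) % T)
    (x : A → ℝ) (hx : ∀ a, (ℓ a : ℝ) ≤ x a ∧ x a ≤ (u a : ℝ))
    (hdiv : ∃ k : ℤ, ∑ a, (γ a : ℝ) * x a = (T : ℝ) * (k : ℝ)) :
    ((T - α : ℤ) : ℝ) * ∑ a ∈ Fᶜ.filter (fun a => 0 < γ a), (γ a : ℝ) * (x a - (ℓ a : ℝ))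
      + (α : ℝ) * ∑ a ∈ Fᶜ.filter (fun a => γ a < 0), ((-γ a : ℤ) : ℝ) * (x a - (ℓ a : ℝ))
      + (α : ℝ) * ∑ a ∈ F.filter (fun a => 0 < γ a), (γ a : ℝ) * ((u a : ℝ) - x a)
      + ((T - α : ℤ) : ℝ) * ∑ a ∈ F.filter (fun a => γ a < 0), ((-γ a : ℤ) : ℝ) * ((u a : ℝ) - x a)
      ≥ (α : ℝ) * ((T - α : ℤ) : ℝ) := by
  obtain ⟨k, hk⟩ := hdiv
  have hT0 : (0:ℤ) < T := by omega
  have hα0 : (0:ℤ) ≤ α := hα ▸ Int.emod_nonneg _ (by omega)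
  have hαT : α < T := hα ▸ Int.emod_lt_of_pos _ hT0
  set S1 := ∑ a ∈ Fᶜ.filter (fun a => 0 < γ a), (γ a : ℝ) * (x a - (ℓ a : ℝ)) with hS1
  set S2 := ∑ a ∈ Fᶜ.filter (fun a => γ a < 0), ((-γ a : ℤ) : ℝ) * (x a - (ℓ a : ℝ)) with hS2
  set S3 := ∑ a ∈ F.filter (fun a => 0 < γ a), (γ a : ℝ) * ((u a : ℝ) - x a) with hS3
  set S4 := ∑ a ∈ F.filter (fun a => γ a < 0), ((-γ a : ℤ) : ℝ) * ((u a : ℝ) - x a) with hS4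
  have hS1n : 0 ≤ S1 := Finset.sum_nonneg (fun a ha => by
    simp only [Finset.mem_filter] at ha
    have h1 : (0:ℝ) ≤ (γ a : ℝ) := by exact_mod_cast le_of_lt ha.2
    nlinarith [(hx a).1])
  have hS2n : 0 ≤ S2 := Finset.sum_nonneg (fun a ha => by
    simp only [Finset.mem_filter] at ha
    have h1 : (0:ℝ) ≤ ((-γ a : ℤ) : ℝ) := by
      have : (0:ℤ) ≤ -γ a := by omega
      exact_mod_cast this
    nlinarith [(hx a).1])
  have hS3n : 0 ≤ S3 := Finset.sum_nonneg (fun a ha => by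
    simp only [Finset.mem_filter] at ha
    have h1 : (0:ℝ) ≤ (γ a : ℝ) := by exact_mod_cast le_of_lt ha.2
    nlinarith [(hx a).2])
  have hS4n : 0 ≤ S4 := Finset.sum_nonneg (fun a ha => by
    simp only [Finset.mem_filter] at ha
    have h1 : (0:ℝ) ≤ ((-γ a : ℤ) : ℝ) := by
      have : (0:ℤ) ≤ -γ a := by omega
      exact_mod_cast this
    nlinarith [(hx a).2])
  set c : ℤ := ∑ a ∈ Fᶜ, γ a * ℓ a + ∑ a ∈ F, γ a * u a with hc
  -- rewrite S2, S3, S4 in γ-form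
  have e2 : S2 = -∑ a ∈ Fᶜ.filter (fun a => γ a < 0), (γ a : ℝ) * (x a - (ℓ a : ℝ)) := by
    rw [hS2, ← Finset.sum_neg_distrib]
    apply Finset.sum_congr rfl
    intro a _
    push_cast
    ring
  have e3 : -S3 = ∑ a ∈ F.filter (fun a => 0 < γ a), (γ a : ℝ) * (x a - (u a : ℝ)) := by
    rw [hS3, ← Finset.sum_neg_distrib]
    apply Finset.sum_congr rfl
    intro a _
    ring
  have e4 : S4 = ∑ a ∈ F.filter (fun a => γ a < 0), (γ a : ℝ) * (x a - (u a : ℝ)) := by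
    rw [hS4]
    apply Finset.sum_congr rfl
    intro a _
    push_cast
    ring
  have h12 : S1 - S2 = ∑ a ∈ Fᶜ, (γ a : ℝ) * (x a - (ℓ a : ℝ)) := by
    rw [← sum_split_aux Fᶜ γ (fun a => x a - (ℓ a : ℝ)), hS1, e2]
    ring
  have h43 : S4 - S3 = ∑ a ∈ F, (γ a : ℝ) * (x a - (u a : ℝ)) := by
    rw [← sum_split_aux F γ (fun a => x a - (u a : ℝ)), sub_eq_add_neg, e4, e3]
    ring
  have d1 : ∑ a ∈ Fᶜ, (γ a : ℝ) * (x a - (ℓ a : ℝ))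
      = ∑ a ∈ Fᶜ, (γ a : ℝ) * x a - ∑ a ∈ Fᶜ, (γ a : ℝ) * (ℓ a : ℝ) := by
    rw [← Finset.sum_sub_distrib]
    apply Finset.sum_congr rfl
    intro a _; ring
  have d2 : ∑ a ∈ F, (γ a : ℝ) * (x a - (u a : ℝ))
      = ∑ a ∈ F, (γ a : ℝ) * x a - ∑ a ∈ F, (γ a : ℝ) * (u a : ℝ) := by
    rw [← Finset.sum_sub_distrib]
    apply Finset.sum_congr rfl
    intro a _; ring
  have h2 : ∑ a ∈ Fᶜ, (γ a : ℝ) * x a + ∑ a ∈ F, (γ a : ℝ) * x a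
      = ∑ a, (γ a : ℝ) * x a := by
    rw [add_comm]
    exact Finset.sum_add_sum_compl F _
  have h3 : (c : ℝ) = (∑ a ∈ Fᶜ, (γ a : ℝ) * (ℓ a : ℝ)) + ∑ a ∈ F, (γ a : ℝ) * (u a : ℝ) := by
    rw [hc]; push_cast; ring
  have hsum : (S1 + S4) - (S2 + S3) = (T : ℝ) * k - (c : ℝ) := by
    have : (S1 + S4) - (S2 + S3) = (S1 - S2) + (S4 - S3) := by ring
    rw [this, h12, h43, d1, d2, h3, ← hk]
    linarith [h2]
  have hα' : α = (-c) % T := by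
    rw [hα]
    congr 1
    rw [hc]
    ring
  obtain ⟨q, hq⟩ : ∃ q : ℤ, -c = T * q + α := by
    refine ⟨(-c) / T, ?_⟩
    have := Int.emod_add_mul_ediv (-c) T
    omega
  have hqR : -(c:ℝ) = (T:ℝ) * (q:ℝ) + (α:ℝ) := by exact_mod_cast hq
  have hK : (S1 + S4) - (S2 + S3) = (T : ℝ) * ((k + q : ℤ) : ℝ) + (α : ℝ) := by
    rw [hsum]
    push_cast
    linarith
  have hTr : (0:ℝ) < (T:ℝ) := by exact_mod_cast hT0
  have hαr : (0:ℝ) ≤ (α:ℝ) := by exact_mod_cast hα0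
  have hαTr : (α:ℝ) < (T:ℝ) := by exact_mod_cast hαT
  have hcast : ((T - α : ℤ) : ℝ) = (T:ℝ) - (α:ℝ) := by push_cast; ring
  rw [hcast]
  rcases le_or_gt 0 (k + q) with hkq | hkq
  · have hkqr : (0:ℝ) ≤ ((k + q : ℤ) : ℝ) := by exact_mod_cast hkq
    have hTK : (0:ℝ) ≤ (T:ℝ) * ((k + q : ℤ) : ℝ) := mul_nonneg hTr.le hkqr
    have h5 : (α:ℝ) + S2 + S3 ≤ S1 + S4 := by linarith
    have h6 := mul_le_mul_of_nonneg_left h5 (show (0:ℝ) ≤ (T:ℝ) - α by linarith)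
    linarith [h6, mul_nonneg hTr.le hS2n, mul_nonneg hTr.le hS3n]
  · have hkq1 : (k + q : ℤ) ≤ -1 := by omega
    have hkqr : ((k + q : ℤ) : ℝ) ≤ ((-1 : ℤ) : ℝ) := Int.cast_le.mpr hkq1
    norm_num at hkqr
    have hTK : (T:ℝ) * ((k + q : ℤ) : ℝ) ≤ -(T:ℝ) := by
      have := mul_le_mul_of_nonneg_left hkqr hTr.le
      linarith
    have h5 : (T:ℝ) - α + S1 + S4 ≤ S2 + S3 := by linarith
    have h6 := mul_le_mul_of_nonneg_left h5 hαr
    linarith [h6, mul_nonneg (show (0:ℝ) ≤ (T:ℝ) - (α:ℝ) by linarith) hS1n,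
      mul_nonneg (show (0:ℝ) ≤ (T:ℝ) - (α:ℝ) by linarith) hS4n,
      mul_nonneg hαr hS1n, mul_nonneg hαr hS4n]
end

section
/- Let δ, ε ∈ ℝ^A with associated positive parameters α_δ, α_ε ∈ {1,…,T−1}, set γ := δ + ε and α_γ := [α_δ + α_ε]_T, and assume α_γ ≥ 1. If y ∈ ℝ^A with y ≥ 0 satisfies the normalized change-cycle inequalities δ₊ᵀy/α_δ + δ₋ᵀy/(T−α_δ) ≥ 1 and ε₊ᵀy/α_ε + ε₋ᵀy/(T−α_ε) ≥ 1, and additionally γ₊ = δ₊ + ε₊ and γ₋ = δ₋ + ε₋, then γ₊ᵀy/α_γ + γ₋ᵀy/(T−α_γ) ≥ 1. -/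
/-!
If `α_δ + α_ε < T`, then `α_γ = α_δ + α_ε` and the two inequalities combine like a mediant: after
multiplying the `i`-th one by `α_i`, each term `α_i n_i / (T - α_i)` only grows when `α_i` is
replaced by `α_γ`. Otherwise `α_γ = α_δ + α_ε - T`, and the substitution `α ↦ T - α`, which
exchanges the roles of positive and negative parts, turns this into the first case.
-/

open Finset

/-- `p` and `n` stand for `δ₊ᵀy` and `δ₋ᵀy`. -/
noncomputable def cycleForm (T α p n : ℝ) : ℝ :=
  p / α + n / (T - α)

lemma cycleForm_sub_swap (T α p n : ℝ) : cycleForm T (T - α) n p = cycleForm T α p n := by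
  rw [cycleForm, cycleForm, sub_sub_cancel, add_comm]

lemma one_le_cycleForm_add {T α₁ α₂ p₁ p₂ n₁ n₂ : ℝ} (hα₁ : 0 < α₁) (hα₂ : 0 < α₂)
    (hT : α₁ + α₂ < T) (hn₁ : 0 ≤ n₁) (hn₂ : 0 ≤ n₂)
    (h₁ : 1 ≤ cycleForm T α₁ p₁ n₁) (h₂ : 1 ≤ cycleForm T α₂ p₂ n₂) :
    1 ≤ cycleForm T (α₁ + α₂) (p₁ + p₂) (n₁ + n₂) := by
  unfold cycleForm at *
  have hσ : 0 < α₁ + α₂ := by linarith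
  have hTσ : 0 < T - (α₁ + α₂) := by linarith
  have bound {α p n : ℝ} (hα : 0 < α) (hασ : α ≤ α₁ + α₂) (hn : 0 ≤ n)
      (h : 1 ≤ p / α + n / (T - α)) : α ≤ p + (α₁ + α₂) * (n / (T - (α₁ + α₂))) := by
    have hTα : 0 < T - α := by linarith
    have hmul : α ≤ p + α * (n / (T - α)) := by
      have := mul_le_mul_of_nonneg_left h hα.le
      rwa [mul_one, mul_add, mul_div_cancel₀ _ hα.ne'] at this
    have hratio : α * (n / (T - α)) ≤ (α₁ + α₂) * (n / (T - (α₁ + α₂))) := by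
      rw [← mul_div_assoc, ← mul_div_assoc, div_le_div_iff₀ hTα hTσ]
      nlinarith [mul_nonneg hn (mul_nonneg (sub_nonneg.2 hασ) (by linarith : 0 ≤ T))]
    linarith
  have hsum : α₁ + α₂ ≤ p₁ + p₂ + (α₁ + α₂) * ((n₁ + n₂) / (T - (α₁ + α₂))) := by
    rw [add_div, mul_add]
    linarith [bound hα₁ (by linarith) hn₁ h₁, bound hα₂ (by linarith) hn₂ h₂]
  have := div_le_div_of_nonneg_right hsum hσ.le
  rwa [div_self hσ.ne', add_div, mul_div_cancel_left₀ _ hσ.ne'] at this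

lemma one_le_cycleForm_add_sub {T α₁ α₂ p₁ p₂ n₁ n₂ : ℝ} (hα₁ : α₁ < T) (hα₂ : α₂ < T)
    (hT : T < α₁ + α₂) (hp₁ : 0 ≤ p₁) (hp₂ : 0 ≤ p₂)
    (h₁ : 1 ≤ cycleForm T α₁ p₁ n₁) (h₂ : 1 ≤ cycleForm T α₂ p₂ n₂) :
    1 ≤ cycleForm T (α₁ + α₂ - T) (p₁ + p₂) (n₁ + n₂) := by
  rw [← cycleForm_sub_swap] at h₁ h₂ ⊢
  rw [show T - (α₁ + α₂ - T) = T - α₁ + (T - α₂) by ring]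
  exact one_le_cycleForm_add (by linarith) (by linarith) (by linarith) hp₁ hp₂ h₁ h₂

lemma Int.emod_eq_self_or_sub {m T : ℤ} (h₀ : 0 ≤ m) (h : m < 2 * T) :
    m % T = m ∨ m % T = m - T := by
  rcases lt_or_ge m T with hm | hm
  · exact .inl (Int.emod_eq_of_lt h₀ hm)
  · right
    rw [← Int.sub_emod_right, Int.emod_eq_of_lt (by omega) (by omega)]

theorem split_stmt7_general {A : Type} [Fintype A]
    (T : ℤ)
    (αδ αε αγ : ℤ)
    (hδ1 : 1 ≤ αδ) (hδ2 : αδ ≤ T - 1)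
    (hε1 : 1 ≤ αε) (hε2 : αε ≤ T - 1)
    (hαγ : αγ = (αδ + αε) % T) (hγ1 : 1 ≤ αγ)
    (δ ε γ : A → ℝ)
    (y : A → ℝ) (hy : ∀ a, 0 ≤ y a)
    (hpos : ∀ a, max (γ a) 0 = max (δ a) 0 + max (ε a) 0)
    (hneg : ∀ a, max (-γ a) 0 = max (-δ a) 0 + max (-ε a) 0)
    (h1 : (∑ a, max (δ a) 0 * y a) / (αδ : ℝ)
        + (∑ a, max (-δ a) 0 * y a) / ((T : ℝ) - (αδ : ℝ)) ≥ 1)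
    (h2 : (∑ a, max (ε a) 0 * y a) / (αε : ℝ)
        + (∑ a, max (-ε a) 0 * y a) / ((T : ℝ) - (αε : ℝ)) ≥ 1) :
    (∑ a, max (γ a) 0 * y a) / (αγ : ℝ)
        + (∑ a, max (-γ a) 0 * y a) / ((T : ℝ) - (αγ : ℝ)) ≥ 1 := by
  have hP : ∑ a, max (γ a) 0 * y a = ∑ a, max (δ a) 0 * y a + ∑ a, max (ε a) 0 * y a := by
    simp only [hpos, add_mul, sum_add_distrib]
  have hN : ∑ a, max (-γ a) 0 * y a = ∑ a, max (-δ a) 0 * y a + ∑ a, max (-ε a) 0 * y a := by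
    simp only [hneg, add_mul, sum_add_distrib]
  have hnonneg (f : A → ℝ) : 0 ≤ ∑ a, max (f a) 0 * y a :=
    sum_nonneg fun a _ => mul_nonneg (le_max_right _ _) (hy a)
  have hγT : αγ < T := hαγ ▸ Int.emod_lt_of_pos _ (by omega)
  show 1 ≤ cycleForm T αγ _ _
  rw [hP, hN]
  rcases Int.emod_eq_self_or_sub (m := αδ + αε) (T := T) (by omega) (by omega) with h | h
  · have hγ : (αγ : ℝ) = αδ + αε := by rw [hαγ, h]; push_cast; rfl
    rw [hγ]
    refine one_le_cycleForm_add (by positivity) (by positivity) ?_ (hnonneg _) (hnonneg _) h1 h2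
    exact_mod_cast (show αδ + αε < T by omega)
  · have hγ : (αγ : ℝ) = αδ + αε - T := by rw [hαγ, h]; push_cast; rfl
    rw [hγ]
    refine one_le_cycleForm_add_sub ?_ ?_ ?_ (hnonneg _) (hnonneg _) h1 h2
    · exact_mod_cast (show αδ < T by omega)
    · exact_mod_cast (show αε < T by omega)
    · exact_mod_cast (show T < αδ + αε by omega)

/-- Combination of two normalized change-cycle inequalities (induction step of
the simple-cycle reduction). -/
theorem split_stmt7 {A : Type} [Fintype A]
    (T : ℤ) (hT : 2 ≤ T)
    (αδ αε αγ : ℤ)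
    (hδ1 : 1 ≤ αδ) (hδ2 : αδ ≤ T - 1)
    (hε1 : 1 ≤ αε) (hε2 : αε ≤ T - 1)
    (hαγ : αγ = (αδ + αε) % T) (hγ1 : 1 ≤ αγ)
    (δ ε γ : A → ℝ) (hγ : γ = δ + ε)
    (y : A → ℝ) (hy : ∀ a, 0 ≤ y a)
    (hpos : ∀ a, max (γ a) 0 = max (δ a) 0 + max (ε a) 0)
    (hneg : ∀ a, max (-γ a) 0 = max (-δ a) 0 + max (-ε a) 0)
    (h1 : (∑ a, max (δ a) 0 * y a) / (αδ : ℝ)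
        + (∑ a, max (-δ a) 0 * y a) / ((T : ℝ) - (αδ : ℝ)) ≥ 1)
    (h2 : (∑ a, max (ε a) 0 * y a) / (αε : ℝ)
        + (∑ a, max (-ε a) 0 * y a) / ((T : ℝ) - (αε : ℝ)) ≥ 1) :
    (∑ a, max (γ a) 0 * y a) / (αγ : ℝ)
        + (∑ a, max (-γ a) 0 * y a) / ((T : ℝ) - (αγ : ℝ)) ≥ 1 :=
  split_stmt7_general T αδ αε αγ hδ1 hδ2 hε1 hε2 hαγ hγ1 δ ε γ y hy hpos hneg h1 h2
end

section
/- Let ψ : ℝ^{n₁} × ℝ^{p₁} → ℝ^{n₂} × ℝ^{p₂} be a linear map and ψ* its dual (transpose with respect to standard bases). Then ψ maps ℝ^{n₁} × ℤ^{p₁} into ℝ^{n₂} × ℤ^{p₂} if and only if ψ(ℝ^{n₁} × {0}) ⊆ ℝ^{n₂} × {0} and ψ*({0} × ℤ^{p₂}) ⊆ {0} × ℤ^{p₁}. -/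
open Finset

/-- Characterization of mixed-integer-compatible linear maps via the dual map. -/
theorem split_stmt8 {n₁ p₁ n₂ p₂ : ℕ}
    (ψ : ((Fin n₁ → ℝ) × (Fin p₁ → ℝ)) →ₗ[ℝ] ((Fin n₂ → ℝ) × (Fin p₂ → ℝ))) :
    (∀ (x : Fin n₁ → ℝ) (z : Fin p₁ → ℤ),
        ∀ j, ∃ k : ℤ, (ψ (x, fun i => (z i : ℝ))).2 j = (k : ℝ))
    ↔ ((∀ x : Fin n₁ → ℝ, (ψ (x, 0)).2 = 0) ∧
       (∀ β₂ : Fin p₂ → ℤ, ∃ β₁ : Fin p₁ → ℤ,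
          ∀ v : (Fin n₁ → ℝ) × (Fin p₁ → ℝ),
            ∑ j, (β₂ j : ℝ) * (ψ v).2 j = ∑ i, (β₁ i : ℝ) * v.2 i)) := by
  have zcast : (fun i => (((0 : Fin p₁ → ℤ) i : ℝ))) = (0 : Fin p₁ → ℝ) := by
    funext i; simp
  constructor
  · intro h
    have h1 : ∀ x : Fin n₁ → ℝ, (ψ (x, 0)).2 = 0 := by
      intro x
      funext j
      by_contra ha
      set a := (ψ (x, 0)).2 j with hadef
      have ha' : a ≠ 0 := ha
      obtain ⟨k, hk⟩ := h ((2 * a)⁻¹ • x) 0 j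
      have hval : (ψ ((2 * a)⁻¹ • x, fun i => (((0 : Fin p₁ → ℤ) i : ℝ)))).2 j
          = (2 * a)⁻¹ * a := by
        rw [zcast]
        have hsm : (((2 * a)⁻¹ • x, (0 : Fin p₁ → ℝ)) :
            (Fin n₁ → ℝ) × (Fin p₁ → ℝ)) = (2 * a)⁻¹ • (x, (0 : Fin p₁ → ℝ)) := by
          simp [Prod.smul_def]
        rw [hsm, map_smul]
        simp [hadef]
      rw [hval] at hk
      have h2a : (2 * a)⁻¹ * a = 2⁻¹ := by field_simp
      rw [h2a] at hk
      have : ((2 * k : ℤ) : ℝ) = 1 := by push_cast; linarith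
      have : (2 * k : ℤ) = 1 := by exact_mod_cast this
      omega
    refine ⟨h1, ?_⟩
    intro β₂
    have hc : ∀ i j, ∃ k : ℤ,
        (ψ (0, Pi.single i 1)).2 j = (k : ℝ) := by
      intro i j
      obtain ⟨k, hk⟩ := h 0 (Pi.single i 1) j
      have hcast : (fun i' => ((Pi.single i 1 : Fin p₁ → ℤ) i' : ℝ))
          = (Pi.single i 1 : Fin p₁ → ℝ) := by
        funext i'
        by_cases hii : i = i' <;> simp [Pi.single_apply, hii]
      rw [hcast] at hk
      exact ⟨k, hk⟩
    choose c hcc using hc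
    refine ⟨fun i => ∑ j, β₂ j * c i j, ?_⟩
    intro v
    have hsplit : (v : (Fin n₁ → ℝ) × (Fin p₁ → ℝ)) = (v.1, 0) + (0, v.2) := by
      simp
    have hdec : ((0 : Fin n₁ → ℝ), v.2) = ∑ i, v.2 i •
        (((0 : Fin n₁ → ℝ), Pi.single i 1) : (Fin n₁ → ℝ) × (Fin p₁ → ℝ)) := by
      ext a
      · simp [Prod.fst_sum]
      · simp only [Prod.snd_sum, Prod.smul_def, smul_zero, Finset.sum_apply,
          Pi.smul_apply, smul_eq_mul, Pi.single_apply]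
        simp
    have hv2 : ∀ j, (ψ v).2 j = ∑ i, v.2 i * (ψ (0, Pi.single i 1)).2 j := by
      intro j
      conv_lhs => rw [hsplit, map_add]
      have : (ψ (v.1, 0)).2 = 0 := h1 v.1
      rw [Prod.snd_add, Pi.add_apply, this, Pi.zero_apply, zero_add]
      rw [hdec, map_sum]
      rw [Prod.snd_sum, Finset.sum_apply]
      refine Finset.sum_congr rfl fun i _ => ?_
      rw [map_smul]
      simp
    calc ∑ j, (β₂ j : ℝ) * (ψ v).2 j
        = ∑ j, ∑ i, (β₂ j : ℝ) * (v.2 i * (ψ (0, Pi.single i 1)).2 j) := by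
          simp_rw [hv2, Finset.mul_sum]
      _ = ∑ i, ∑ j, (β₂ j : ℝ) * (v.2 i * (ψ (0, Pi.single i 1)).2 j) :=
          Finset.sum_comm
      _ = ∑ i, ((∑ j, (β₂ j * c i j : ℤ) : ℤ) : ℝ) * v.2 i := by
          refine Finset.sum_congr rfl fun i _ => ?_
          push_cast
          rw [Finset.sum_mul]
          refine Finset.sum_congr rfl fun j _ => ?_
          rw [hcc i j]; ring
  · rintro ⟨h1, h2⟩ x z j
    obtain ⟨β₁, hβ⟩ := h2 (Pi.single j 1)
    have := hβ (x, fun i => (z i : ℝ))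
    refine ⟨∑ i, β₁ i * z i, ?_⟩
    have hl : ∑ j', ((Pi.single j 1 : Fin p₂ → ℤ) j' : ℝ) *
        (ψ (x, fun i => (z i : ℝ))).2 j'
        = (ψ (x, fun i => (z i : ℝ))).2 j := by
      rw [Finset.sum_eq_single j]
      · simp
      · intro b _ hb; simp [Pi.single_apply, Ne.symm hb]
      · simp
    rw [hl] at this
    rw [this]
    push_cast
    rfl
end

section
/- Let φ : ℝ^{n₁} × ℝ^{p₁} → ℝ^{n₂} × ℝ^{p₂} be an affine map such that φ(ℝ^{n₁} × ℤ^{p₁}) ⊆ ℝ^{n₂} × ℤ^{p₂}, and let P₁, P₂ be polyhedra with φ(P₁) ⊆ P₂. Then for every β₂ ∈ ℤ^{p₂}, φ maps conv{(x,z) ∈ P₁ : β₁ᵀz ∈ ℤ} into conv{(x,z) ∈ P₂ : β₂ᵀz ∈ ℤ}, where β₁ is the integral vector determined by the dual of the linear part of φ; consequently φ maps the split closure of P₁ into the split closure of P₂. -/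
open Finset

/-- A polyhedron: a finite intersection of affine halfspaces. -/
def IsPolyhedron {E : Type*} [AddCommGroup E] [Module ℝ E] (P : Set E) : Prop :=
  ∃ (m : ℕ) (f : Fin m → E →ₗ[ℝ] ℝ) (b : Fin m → ℝ), P = {v | ∀ i, f i v ≤ b i}

/-- The split closure of a set of mixed (continuous, integer-relaxed) points. -/
def splitClosure {n p : ℕ} (P : Set ((Fin n → ℝ) × (Fin p → ℝ))) :
    Set ((Fin n → ℝ) × (Fin p → ℝ)) :=
  ⋂ β : Fin p → ℤ,
    convexHull ℝ {v ∈ P | ∃ k : ℤ, ∑ i, (β i : ℝ) * v.2 i = (k : ℝ)}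

/-- Mixed-integer-compatible maps send split closures into split closures. -/
theorem split_stmt9 {n₁ p₁ n₂ p₂ : ℕ}
    (φ : ((Fin n₁ → ℝ) × (Fin p₁ → ℝ)) →ᵃ[ℝ] ((Fin n₂ → ℝ) × (Fin p₂ → ℝ)))
    (hmic : ∀ (x : Fin n₁ → ℝ) (z : Fin p₁ → ℤ),
        ∀ j, ∃ k : ℤ, (φ (x, fun i => (z i : ℝ))).2 j = (k : ℝ))
    (P₁ : Set ((Fin n₁ → ℝ) × (Fin p₁ → ℝ)))
    (P₂ : Set ((Fin n₂ → ℝ) × (Fin p₂ → ℝ)))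
    (hP₁ : IsPolyhedron P₁) (hP₂ : IsPolyhedron P₂)
    (hsub : φ '' P₁ ⊆ P₂) :
    (∀ β₂ : Fin p₂ → ℤ, ∀ β₁ : Fin p₁ → ℤ,
      (∀ v, ∑ j, (β₂ j : ℝ) * (φ v - φ 0).2 j = ∑ i, (β₁ i : ℝ) * v.2 i) →
      φ '' convexHull ℝ {v ∈ P₁ | ∃ k : ℤ, ∑ i, (β₁ i : ℝ) * v.2 i = (k : ℝ)}
        ⊆ convexHull ℝ {v ∈ P₂ | ∃ k : ℤ, ∑ j, (β₂ j : ℝ) * v.2 j = (k : ℝ)}) ∧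
    φ '' splitClosure P₁ ⊆ splitClosure P₂ := by
  classical
  -- difference with base point gives the linear part
  have hdiff : ∀ v, φ v - φ 0 = φ.linear v := by
    intro v
    have := φ.linearMap_vsub v 0
    simpa using this.symm
  -- φ 0 has integral integer-part
  have hzero : ∀ j, ∃ k : ℤ, (φ 0).2 j = (k : ℝ) := by
    intro j
    obtain ⟨k, hk⟩ := hmic 0 0 j
    refine ⟨k, ?_⟩
    have h0 : ((0, fun i => (((0 : Fin p₁ → ℤ) i : ℤ) : ℝ)) :
        (Fin n₁ → ℝ) × (Fin p₁ → ℝ)) = 0 := by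
      refine Prod.ext rfl ?_
      funext i; simp
    rwa [h0] at hk
  -- the linear part kills the continuous variables in the integer coordinates
  have hxzero : ∀ (x : Fin n₁ → ℝ) j, (φ.linear (x, 0)).2 j = 0 := by
    intro x j
    set c := (φ.linear ((x, 0) : (Fin n₁ → ℝ) × (Fin p₁ → ℝ))).2 j with hc
    by_contra hne
    have hint : ∀ t : ℝ, ∃ k : ℤ, t * c = (k : ℝ) := by
      intro t
      obtain ⟨k, hk⟩ := hmic (t • x) 0 j
      obtain ⟨k0, hk0⟩ := hzero j
      refine ⟨k - k0, ?_⟩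
      have h0 : (fun i => (((0 : Fin p₁ → ℤ) i : ℤ) : ℝ)) = (0 : Fin p₁ → ℝ) := by
        funext i; simp
      rw [h0] at hk
      have hsm : ((t • x, (0 : Fin p₁ → ℝ)) : (Fin n₁ → ℝ) × (Fin p₁ → ℝ))
          = t • ((x, 0) : (Fin n₁ → ℝ) × (Fin p₁ → ℝ)) := by
        refine Prod.ext rfl ?_; simp
      have h1 : (φ.linear ((t • x, (0 : Fin p₁ → ℝ)) :
          (Fin n₁ → ℝ) × (Fin p₁ → ℝ))).2 j = t * c := by
        rw [hsm, map_smul]; rfl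
      have h2 : (φ.linear ((t • x, (0 : Fin p₁ → ℝ)) :
          (Fin n₁ → ℝ) × (Fin p₁ → ℝ))).2 j
          = (φ (t • x, (0 : Fin p₁ → ℝ))).2 j - (φ 0).2 j := by
        rw [← hdiff]; rfl
      rw [h1, hk, hk0] at h2
      rw [h2]; push_cast; ring
    obtain ⟨k, hk⟩ := hint (1 / (2 * c))
    have hc2 : 1 / (2 * c) * c = 1 / 2 := by
      field_simp
    rw [hc2] at hk
    have h2k : ((2 * k : ℤ) : ℝ) = ((1 : ℤ) : ℝ) := by push_cast; linarith
    have := Int.cast_injective h2k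
    omega
  -- the columns of the linear part are integral
  have hcol : ∀ (i : Fin p₁) (j : Fin p₂), ∃ m : ℤ,
      (φ.linear ((0, Pi.single i 1) : (Fin n₁ → ℝ) × (Fin p₁ → ℝ))).2 j = (m : ℝ) := by
    intro i j
    obtain ⟨k, hk⟩ := hmic 0 (Pi.single i 1) j
    obtain ⟨k0, hk0⟩ := hzero j
    refine ⟨k - k0, ?_⟩
    have hcast : (fun i' => (((Pi.single i 1 : Fin p₁ → ℤ) i' : ℤ) : ℝ))
        = (Pi.single i 1 : Fin p₁ → ℝ) := by
      funext i'
      rcases eq_or_ne i' i with h | h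
      · subst h; simp
      · simp [Pi.single_apply, h]
    rw [hcast] at hk
    have h2 : (φ.linear ((0, Pi.single i 1) : (Fin n₁ → ℝ) × (Fin p₁ → ℝ))).2 j
        = (φ (0, Pi.single i 1)).2 j - (φ 0).2 j := by
      rw [← hdiff]; rfl
    rw [h2, hk, hk0]; push_cast; ring
  choose m hmspec using hcol
  -- expansion of the linear part
  have hexpand : ∀ (v : (Fin n₁ → ℝ) × (Fin p₁ → ℝ)) (j : Fin p₂),
      (φ.linear v).2 j = ∑ i, v.2 i * (m i j : ℝ) := by
    intro v j
    have hsplit : v = ((v.1, 0) : (Fin n₁ → ℝ) × (Fin p₁ → ℝ))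
        + ∑ i, v.2 i • ((0, Pi.single i 1) : (Fin n₁ → ℝ) × (Fin p₁ → ℝ)) := by
      refine Prod.ext ?_ ?_
      · simp [Prod.fst_sum]
      · funext i'
        simp [Prod.snd_sum, Finset.sum_apply, Pi.single_apply]
    calc (φ.linear v).2 j
        = (φ.linear ((v.1, 0) : (Fin n₁ → ℝ) × (Fin p₁ → ℝ))).2 j
          + ∑ i, v.2 i * (φ.linear ((0, Pi.single i 1) :
              (Fin n₁ → ℝ) × (Fin p₁ → ℝ))).2 j := by
          conv_lhs => rw [hsplit]
          simp only [map_add, map_sum, map_smul, Prod.snd_add, Prod.snd_sum,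
            Pi.add_apply, Finset.sum_apply, Prod.smul_snd, Pi.smul_apply, smul_eq_mul]
      _ = ∑ i, v.2 i * (m i j : ℝ) := by
          rw [hxzero]
          simp only [zero_add]
          exact Finset.sum_congr rfl fun i _ => by rw [hmspec]
  -- main statement for a single split
  have main : ∀ β₂ : Fin p₂ → ℤ, ∀ β₁ : Fin p₁ → ℤ,
      (∀ v, ∑ j, (β₂ j : ℝ) * (φ v - φ 0).2 j = ∑ i, (β₁ i : ℝ) * v.2 i) →
      φ '' convexHull ℝ {v ∈ P₁ | ∃ k : ℤ, ∑ i, (β₁ i : ℝ) * v.2 i = (k : ℝ)}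
        ⊆ convexHull ℝ {v ∈ P₂ | ∃ k : ℤ, ∑ j, (β₂ j : ℝ) * v.2 j = (k : ℝ)} := by
    intro β₂ β₁ hrel
    rw [AffineMap.image_convexHull]
    apply convexHull_mono
    rintro _ ⟨v, ⟨hvP, k, hk⟩, rfl⟩
    have hK : ∃ K : ℤ, ∑ j, (β₂ j : ℝ) * (φ 0).2 j = (K : ℝ) := by
      choose g hg using hzero
      refine ⟨∑ j, β₂ j * g j, ?_⟩
      push_cast
      exact Finset.sum_congr rfl fun j _ => by rw [hg]
    obtain ⟨K, hKs⟩ := hK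
    refine ⟨hsub ⟨v, hvP, rfl⟩, k + K, ?_⟩
    have hsum : ∑ j, (β₂ j : ℝ) * (φ v).2 j
        = ∑ j, (β₂ j : ℝ) * (φ v - φ 0).2 j + ∑ j, (β₂ j : ℝ) * (φ 0).2 j := by
      rw [← Finset.sum_add_distrib]
      refine Finset.sum_congr rfl fun j _ => ?_
      have : (φ v - φ 0).2 j = (φ v).2 j - (φ 0).2 j := rfl
      rw [this]; ring
    rw [hsum, hrel v, hk, hKs]; push_cast; ring
  refine ⟨main, ?_⟩
  rintro _ ⟨w, hw, rfl⟩
  simp only [splitClosure, Set.mem_iInter]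
  intro β₂
  set β₁ : Fin p₁ → ℤ := fun i => ∑ j, β₂ j * m i j with hβ₁
  have hrel : ∀ v, ∑ j, (β₂ j : ℝ) * (φ v - φ 0).2 j = ∑ i, (β₁ i : ℝ) * v.2 i := by
    intro v
    have : ∀ j, (φ v - φ 0).2 j = (φ.linear v).2 j := by
      intro j; rw [hdiff]
    simp_rw [this, hexpand, Finset.mul_sum]
    rw [Finset.sum_comm]
    refine Finset.sum_congr rfl fun i _ => ?_
    rw [hβ₁]; push_cast
    rw [Finset.sum_mul]
    exact Finset.sum_congr rfl fun j _ => by ring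
  exact main β₂ β₁ hrel ⟨w, Set.mem_iInter.mp hw β₁, rfl⟩
end

section
/- For two polyhedra P₁ ⊆ ℝ^{n₁} × ℝ^{p₁} and P₂ ⊆ ℝ^{n₂} × ℝ^{p₂}, the split closure of the Cartesian product equals the product of the split closures: (P₁ × P₂)_split = (P₁)_split × (P₂)_split (after reordering coordinates so that integer variables are grouped). -/
open Finset

/-- The split closure commutes with Cartesian products. -/
theorem split_stmt10 {n₁ p₁ n₂ p₂ : ℕ}
    (P₁ : Set ((Fin n₁ → ℝ) × (Fin p₁ → ℝ)))
    (P₂ : Set ((Fin n₂ → ℝ) × (Fin p₂ → ℝ)))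
    (hP₁ : IsPolyhedron P₁) (hP₂ : IsPolyhedron P₂) :
    (⋂ β : (Fin p₁ → ℤ) × (Fin p₂ → ℤ),
      convexHull ℝ {v ∈ P₁ ×ˢ P₂ | ∃ k : ℤ,
        ∑ i, (β.1 i : ℝ) * v.1.2 i + ∑ j, (β.2 j : ℝ) * v.2.2 j = (k : ℝ)})
    = splitClosure P₁ ×ˢ splitClosure P₂ := by
  ext v
  simp only [Set.mem_iInter, splitClosure, Set.mem_prod]
  constructor
  · intro h
    constructor
    · intro β₁
      have h1 := h (β₁, 0)
      have h2 : v ∈ convexHull ℝ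
          ({v ∈ P₁ | ∃ k : ℤ, ∑ i, (β₁ i : ℝ) * v.2 i = (k : ℝ)} ×ˢ P₂) := by
        refine convexHull_mono ?_ h1
        rintro ⟨a, b⟩ ⟨⟨ha, hb⟩, k, hk⟩
        refine ⟨⟨ha, k, ?_⟩, hb⟩
        simpa using hk
      rw [convexHull_prod] at h2
      exact h2.1
    · intro β₂
      have h1 := h (0, β₂)
      have h2 : v ∈ convexHull ℝ
          (P₁ ×ˢ {v ∈ P₂ | ∃ k : ℤ, ∑ j, (β₂ j : ℝ) * v.2 j = (k : ℝ)}) := by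
        refine convexHull_mono ?_ h1
        rintro ⟨a, b⟩ ⟨⟨ha, hb⟩, k, hk⟩
        refine ⟨ha, hb, k, ?_⟩
        simpa using hk
      rw [convexHull_prod] at h2
      exact h2.2
  · rintro ⟨h₁, h₂⟩ ⟨β₁, β₂⟩
    have hsub : {v ∈ P₁ | ∃ k : ℤ, ∑ i, (β₁ i : ℝ) * v.2 i = (k : ℝ)} ×ˢ
        {v ∈ P₂ | ∃ k : ℤ, ∑ j, (β₂ j : ℝ) * v.2 j = (k : ℝ)} ⊆
        {v ∈ P₁ ×ˢ P₂ | ∃ k : ℤ,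
          ∑ i, ((β₁, β₂).1 i : ℝ) * v.1.2 i + ∑ j, ((β₁, β₂).2 j : ℝ) * v.2.2 j = (k : ℝ)} := by
      rintro ⟨a, b⟩ ⟨⟨ha, k₁, hk₁⟩, hb, k₂, hk₂⟩
      refine ⟨⟨ha, hb⟩, k₁ + k₂, ?_⟩
      push_cast
      rw [hk₁, hk₂]
    apply convexHull_mono hsub
    rw [convexHull_prod]
    exact ⟨h₁ β₁, h₂ β₂⟩
end
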